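/- arXiv:0911.3162 — 3 statements merged into one kernel-verified Lean document; each statement's English description precedes it below -/
import Mathlib

section
/- Let Z be a countable type, p a probability mass function on Z, I : Z → {0,1}, t : Z → ℕ, and let δ ∈ (0,1) and η > 0 be reals. If ∑_z (1+I(z))·p(z)·(1-δ)^{t(z)} ≥ 1+η, then ∑_{z : I(z)=1 and t(z) ≤ 2·ln(1/δ)/δ} p(z) ≥ (η - 2δ²)/2. (This is the computation-path decomposition showing that if Player 2's expected discounted payoff exceeds 1+η, then with probability roughly η/2 his machine halts within 2·ln(1/δ)/δ steps and succeeds.) -/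
open Real

/-- Computation-path decomposition: if the expected discounted payoff
∑_z (1+I(z))·p(z)·(1-δ)^{t(z)} is at least 1+η, then the total probability of
paths with I(z)=1 halting within 2·ln(1/δ)/δ steps is at least (η - 2δ²)/2. -/
theorem computation_path_decomposition {Z : Type*} [Countable Z]
    (p : Z → ℝ) (hp0 : ∀ z, 0 ≤ p z) (hp1 : HasSum p 1)
    (I : Z → ℕ) (hI : ∀ z, I z ≤ 1) (t : Z → ℕ) (δ η : ℝ)
    (hδ0 : 0 < δ) (hδ1 : δ < 1) (hη : 0 < η)
    (hsum : 1 + η ≤ ∑' z, (1 + (I z : ℝ)) * p z * (1 - δ) ^ (t z)) :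
    (η - 2 * δ ^ 2) / 2 ≤
      ∑' z : {z : Z // I z = 1 ∧ (t z : ℝ) ≤ 2 * Real.log (1 / δ) / δ}, p (z : Z) := by
  set T : ℝ := 2 * Real.log (1 / δ) / δ with hT
  have hp : Summable p := hp1.summable
  have h01 : (0:ℝ) ≤ 1 - δ := by linarith
  set s : Set Z := {z | I z = 1 ∧ (t z : ℝ) ≤ T} with hs
  have hind_nonneg : ∀ z, (0:ℝ) ≤ s.indicator p z :=
    fun z => Set.indicator_nonneg (fun z _ => hp0 z) z
  have key : ∀ z, (1 + (I z : ℝ)) * p z * (1 - δ) ^ (t z)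
      ≤ p z + s.indicator p z + δ ^ 2 * p z := by
    intro z
    have hle1 : (1 - δ) ^ (t z) ≤ 1 := pow_le_one₀ h01 (by linarith)
    have hpow0 : (0:ℝ) ≤ (1 - δ) ^ (t z) := pow_nonneg h01 _
    have hδ2 : (0:ℝ) < δ ^ 2 := by positivity
    rcases Nat.le_one_iff_eq_zero_or_eq_one.mp (hI z) with h | h
    · rw [h]; push_cast
      nlinarith [hp0 z, hind_nonneg z]
    · rw [h]; push_cast
      by_cases hts : (t z : ℝ) ≤ T
      · have hmem : z ∈ s := ⟨h, hts⟩
        rw [Set.indicator_of_mem hmem]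
        nlinarith [hp0 z]
      · have hexp : (1 - δ) ^ (t z) ≤ δ ^ 2 := by
          have h1 : (1 - δ : ℝ) ≤ Real.exp (-δ) := by
            have := Real.add_one_le_exp (-δ); linarith
          have h2 : (1 - δ) ^ (t z) ≤ Real.exp (-δ) ^ (t z) :=
            pow_le_pow_left₀ h01 h1 _
          rw [← Real.exp_nat_mul] at h2
          have hTlt : T < (t z : ℝ) := lt_of_not_ge hts
          have hδT : δ * T = 2 * Real.log (1 / δ) := by
            rw [hT]; field_simp
          have h3 : (t z : ℝ) * (-δ) ≤ -(2 * Real.log (1 / δ)) := by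
            nlinarith
          have h4 : Real.exp ((t z : ℝ) * (-δ)) ≤ Real.exp (-(2 * Real.log (1 / δ))) :=
            Real.exp_le_exp.mpr h3
          have h5 : Real.exp (-(2 * Real.log (1 / δ))) = δ ^ 2 := by
            rw [one_div, Real.log_inv]
            have : -(2 * -Real.log δ) = Real.log (δ ^ 2) := by
              rw [Real.log_pow]; push_cast; ring
            rw [this, Real.exp_log (by positivity)]
          calc (1 - δ) ^ (t z) ≤ Real.exp ((t z : ℝ) * (-δ)) := h2
            _ ≤ δ ^ 2 := h5 ▸ h4
        nlinarith [hp0 z, hind_nonneg z]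
  -- summabilities
  have hind_sum : Summable (s.indicator p) :=
    hp.indicator s
  have hg : Summable (fun z => p z + s.indicator p z + δ ^ 2 * p z) :=
    ((hp.add hind_sum).add (hp.mul_left _))
  have hf_nonneg : ∀ z, 0 ≤ (1 + (I z : ℝ)) * p z * (1 - δ) ^ (t z) := by
    intro z
    have : (0:ℝ) ≤ 1 + (I z : ℝ) := by positivity
    exact mul_nonneg (mul_nonneg this (hp0 z)) (pow_nonneg h01 _)
  have hf : Summable (fun z => (1 + (I z : ℝ)) * p z * (1 - δ) ^ (t z)) :=
    Summable.of_nonneg_of_le hf_nonneg key hg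
  have hle : ∑' z, (1 + (I z : ℝ)) * p z * (1 - δ) ^ (t z)
      ≤ ∑' z, (p z + s.indicator p z + δ ^ 2 * p z) :=
    Summable.tsum_le_tsum key hf hg
  have hsplit : ∑' z, (p z + s.indicator p z + δ ^ 2 * p z)
      = 1 + (∑' z, s.indicator p z) + δ ^ 2 := by
    rw [Summable.tsum_add (hp.add hind_sum) (hp.mul_left _), Summable.tsum_add hp hind_sum,
      tsum_mul_left, hp1.tsum_eq]
    ring
  have hsub : (∑' z : s, p z) = ∑' z, s.indicator p z := tsum_subtype s p
  have hgoal : η - δ ^ 2 ≤ ∑' z, s.indicator p z := by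
    rw [hsplit] at hle
    linarith [hsum.trans hle]
  have hfinal : (∑' z : {z : Z // I z = 1 ∧ (t z : ℝ) ≤ T}, p (z : Z))
      = ∑' z, s.indicator p z := hsub
  rw [hfinal]
  have hδ2 : (0:ℝ) ≤ δ ^ 2 := by positivity
  linarith
end

section
/- For every real c ≥ 1 there exists ε₀ ∈ (0,1) such that for all ε with 0 < ε < ε₀, setting δ = ε^c and n = ⌈1/(ε·ln(1/ε))⌉, one has 2·ln(1/δ)/δ ≤ n^c · (ln n)^{c+2}. (This converts the halting-time bound 2·ln(1/δ)/δ, expressed in terms of the discount rate δ = ε^c, into a time bound of the form n^c·polylog(n) in terms of the input length n chosen by Alice.) -/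
open Real

/-!
Write `L = log (1/ε)` and `x = 1/(ε L)`, so that `n = ⌈x⌉ ≥ x`. Since `log L ≤ L/2`, we get
`log n ≥ log x = L - log L ≥ L/2`, hence `n^c (log n)^(c+2) ≥ x^c (L/2)^(c+2) = (L/2)^2 / (2ε)^c`,
because `x L / 2 = 1/(2ε)`. The left-hand side is `2 c L / ε^c`, so it suffices that `L ≥ 8 c 2^c`,
which holds once `ε < exp (-max (8 c 2^c) 1)`.
-/

theorem Real.log_le_half_self {x : ℝ} (hx : 0 < x) : log x ≤ x / 2 := by
  have h := log_le_sub_one_of_pos (sqrt_pos.mpr hx)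
  rw [log_sqrt hx.le] at h
  nlinarith [sq_sqrt hx.le, sq_nonneg (√x - 2)]

theorem Real.half_log_le_log_div_log {y : ℝ} (hy : 0 < log y) :
    log y / 2 ≤ log (y / log y) := by
  have hy0 : y ≠ 0 := by rintro rfl; simp at hy
  rw [log_div hy0 hy.ne']
  linarith [log_le_half_self hy]

theorem Real.lt_log_one_div_of_lt_exp_neg {M ε : ℝ} (hε : 0 < ε) (h : ε < exp (-M)) :
    M < log (1 / ε) := by
  rw [one_div, log_inv, lt_neg]
  simpa only [log_exp] using log_lt_log hε h

theorem two_mul_log_one_div_rpow_div_le {c ε N : ℝ} (hc : 0 ≤ c) (hε : 0 < ε)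
    (hL : 0 < log (1 / ε)) (hcL : 8 * c * 2 ^ c ≤ log (1 / ε))
    (hN : 1 / (ε * log (1 / ε)) ≤ N) :
    2 * log (1 / ε ^ c) / ε ^ c ≤ N ^ c * log N ^ (c + 2) := by
  set L := log (1 / ε)
  set x := 1 / (ε * L)
  have hx : 0 < x := by positivity
  have hlogx : L / 2 ≤ log x := by
    simpa only [x, div_div] using half_log_le_log_div_log hL
  have hlog_rpow : log (1 / ε ^ c) = c * L := by
    rw [one_div, ← inv_rpow hε.le, log_rpow (by positivity), ← one_div]
  have hxL : x * (L / 2) = 1 / (2 * ε) := by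
    simp only [x]
    field_simp
  have hε2 : (2 * ε) ^ c = 2 ^ c * ε ^ c := mul_rpow zero_le_two hε.le
  calc 2 * log (1 / ε ^ c) / ε ^ c ≤ (L / 2) ^ 2 / (2 * ε) ^ c := by
        rw [hlog_rpow, hε2, div_le_div_iff₀ (by positivity) (by positivity)]
        have hεc : 0 < ε ^ c := rpow_pos_of_pos hε c
        nlinarith [mul_nonneg (mul_nonneg hL.le hεc.le) (sub_nonneg.2 hcL)]
    _ = x ^ c * (L / 2) ^ (c + 2) := by
        rw [rpow_add (by positivity), ← mul_assoc, ← mul_rpow hx.le (by positivity), hxL,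
          div_rpow zero_le_one (by positivity), one_rpow, rpow_two]
        ring
    _ ≤ N ^ c * log N ^ (c + 2) := by
        have hN0 : 0 < N := hx.trans_le hN
        gcongr
        exact hlogx.trans (log_le_log hx hN)

/-- For every real c ≥ 1 there exists ε₀ ∈ (0,1) such that for all 0 < ε < ε₀,
with δ = ε^c and n = ⌈1/(ε·ln(1/ε))⌉, one has 2·ln(1/δ)/δ ≤ n^c·(ln n)^{c+2}. -/
theorem halting_time_to_input_length (c : ℝ) (hc : 1 ≤ c) :
    ∃ ε₀ : ℝ, 0 < ε₀ ∧ ε₀ < 1 ∧ ∀ ε : ℝ, 0 < ε → ε < ε₀ →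
      2 * Real.log (1 / ε ^ c) / ε ^ c ≤
        ((⌈1 / (ε * Real.log (1 / ε))⌉₊ : ℝ)) ^ c *
          (Real.log (⌈1 / (ε * Real.log (1 / ε))⌉₊ : ℝ)) ^ (c + 2) := by
  set M := max (8 * c * 2 ^ c) 1
  have hM : 1 ≤ M := le_max_right _ _
  refine ⟨exp (-M), exp_pos _, exp_lt_one_iff.mpr (by linarith), fun ε hε hεM => ?_⟩
  have hML := lt_log_one_div_of_lt_exp_neg hε hεM
  exact two_mul_log_one_div_rpow_div_le (by linarith) hε (by linarith)
    ((le_max_left _ _).trans hML.le) (Nat.le_ceil _)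
end

section
/- Let μ be a probability mass function on a countable type S, let γ be a real with 0 < γ ≤ 1, and let (g_i)_{i∈ℕ} be a sequence of functions g_i : S → ℝ with 0 ≤ g_i(s) ≤ 2 for all i and s. If ∑_s μ(s)·g_i(s) ≥ 1+γ for every i ∈ ℕ, then there exists s ∈ S with μ(s) > 0 such that g_i(s) ≥ 1+γ/2 for infinitely many i. (This is the argument showing that if a mixed strategy T of Player 2 yields expected payoff at least 1+γ against Alice for every discount rate in an infinite sequence, then some single pure strategy in the support of T yields payoff at least 1+γ/2 for infinitely many of these discount rates; it crucially uses that the payoffs of the Factoring game are bounded above by 2.) -/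
open Real Set

/-! Because the payoffs are at most `2`, the set of points where `g i` reaches `1 + γ/2` must carry
mass at least `γ/2` for every `i`; otherwise the expectation would stay below `1 + γ`. If every point
of positive mass lay in only finitely many of these sets, then beyond some index they would all avoid
a finite set carrying all but less than `γ/2` of the mass, which is impossible. -/

section

variable {S : Type*} {μ : S → ℝ}

lemma tsum_mul_le_add_tsum_indicator_le (hμ0 : ∀ s, 0 ≤ μ s) (hμ1 : HasSum μ 1)
    {f : S → ℝ} {t : ℝ} (hf0 : ∀ s, 0 ≤ f s) (hf : ∀ s, f s ≤ t + 1) :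
    ∑' s, μ s * f s ≤ t + ∑' s, {s | t ≤ f s}.indicator μ s := by
  have hμ : Summable μ := hμ1.summable
  have hμf : Summable fun s => μ s * f s :=
    .of_nonneg_of_le (fun s => mul_nonneg (hμ0 s) (hf0 s))
      (fun s => mul_le_mul_of_nonneg_left (hf s) (hμ0 s)) (hμ.mul_right (t + 1))
  have hle : ∀ s, μ s * f s ≤ t * μ s + {s | t ≤ f s}.indicator μ s := by
    intro s
    by_cases hs : t ≤ f s
    · rw [indicator_of_mem (show s ∈ {s | t ≤ f s} from hs)]
      nlinarith [hf s, hμ0 s]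
    · rw [indicator_of_notMem (show s ∉ {s | t ≤ f s} from hs)]
      nlinarith [hμ0 s]
  calc ∑' s, μ s * f s ≤ ∑' s, (t * μ s + {s | t ≤ f s}.indicator μ s) :=
        hμf.tsum_le_tsum hle ((hμ.mul_left t).add (hμ.indicator _))
    _ = t + ∑' s, {s | t ≤ f s}.indicator μ s := by
        rw [(hμ.mul_left t).tsum_add (hμ.indicator _), tsum_mul_left, hμ1.tsum_eq, mul_one]

lemma exists_pos_infinite_mem_of_le_tsum_indicator (hμ0 : ∀ s, 0 ≤ μ s) (hμ : Summable μ)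
    {A : ℕ → Set S} {ε : ℝ} (hε : 0 < ε) (hA : ∀ i, ε ≤ ∑' s, (A i).indicator μ s) :
    ∃ s, 0 < μ s ∧ {i | s ∈ A i}.Infinite := by
  by_contra! hfin
  obtain ⟨F, hF⟩ := ((tendsto_order.1 (tendsto_tsum_compl_atTop_zero μ)).2 ε hε).exists
  have hAvoid : ∀ᶠ i in Filter.cofinite, ∀ s ∈ F, 0 < μ s → s ∉ A i :=
    (Filter.eventually_all_finset F).2 fun s _ =>
      Filter.eventually_imp_distrib_left.2 fun hs => (hfin s hs).eventually_cofinite_notMem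
  obtain ⟨N, hN⟩ := hAvoid.exists
  have hsub : A N ∩ Function.support μ ⊆ (↑F : Set S)ᶜ := fun s ⟨hsA, hs⟩ hsF =>
    hN s hsF ((hμ0 s).lt_of_ne' hs) hsA
  have hle : ∑' s, (A N).indicator μ s ≤ ∑' s : {x // x ∉ F}, μ s :=
    calc ∑' s, (A N).indicator μ s = ∑' s, (A N ∩ Function.support μ).indicator μ s := by
          rw [indicator_inter_support]
      _ ≤ ∑' s, (↑F : Set S)ᶜ.indicator μ s :=
          (hμ.indicator _).tsum_le_tsum (indicator_le_indicator_of_subset hsub hμ0)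
            (hμ.indicator _)
      _ = ∑' s : {x // x ∉ F}, μ s := (tsum_subtype _ μ).symm
  linarith [hA N]

end

theorem pure_strategy_high_payoff_extraction_general {S : Type*}
    (μ : S → ℝ) (hμ0 : ∀ s, 0 ≤ μ s) (hμ1 : HasSum μ 1)
    (γ : ℝ) (hγ0 : 0 < γ)
    (g : ℕ → S → ℝ) (hg0 : ∀ i s, 0 ≤ g i s) (hg2 : ∀ i s, g i s ≤ 2)
    (hE : ∀ i : ℕ, 1 + γ ≤ ∑' s, μ s * g i s) :
    ∃ s : S, 0 < μ s ∧ {i : ℕ | 1 + γ / 2 ≤ g i s}.Infinite := by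
  have hmass : ∀ i, γ / 2 ≤ ∑' s, {s | 1 + γ / 2 ≤ g i s}.indicator μ s := fun i => by
    have := tsum_mul_le_add_tsum_indicator_le hμ0 hμ1 (hg0 i)
      (t := 1 + γ / 2) fun s => by linarith [hg2 i s]
    linarith [hE i]
  exact exists_pos_infinite_mem_of_le_tsum_indicator hμ0 hμ1.summable (half_pos hγ0) hmass

/-- If each of a sequence of [0,2]-valued functions g_i has expectation at least
1+γ under a probability mass function μ, then some point s with μ(s) > 0
satisfies g_i(s) ≥ 1+γ/2 for infinitely many i. -/
theorem pure_strategy_high_payoff_extraction {S : Type*} [Countable S]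
    (μ : S → ℝ) (hμ0 : ∀ s, 0 ≤ μ s) (hμ1 : HasSum μ 1)
    (γ : ℝ) (hγ0 : 0 < γ) (hγ1 : γ ≤ 1)
    (g : ℕ → S → ℝ) (hg0 : ∀ i s, 0 ≤ g i s) (hg2 : ∀ i s, g i s ≤ 2)
    (hE : ∀ i : ℕ, 1 + γ ≤ ∑' s, μ s * g i s) :
    ∃ s : S, 0 < μ s ∧ {i : ℕ | 1 + γ / 2 ≤ g i s}.Infinite :=
  pure_strategy_high_payoff_extraction_general μ hμ0 hμ1 γ hγ0 g hg0 hg2 hE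
end
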